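/- Let g : ℝ → ℂⁿ be continuously differentiable and A : ℝ → Matrix n n ℂ continuous, and set f(t) = g'(t) + A(t) g(t). Let u solve u' + Au = -f with u(T) = 0. Then u(t) = -g(t) + V(t) g(T) where V solves V' + AV = 0, V(T) = Id; in particular u(0) = V(0) g(T) - g(0). -/

import Mathlib

/-!
The difference `w = u + g - V · g T` satisfies the homogeneous equation `w' = -A w`, since
`g' + A g = f` and `V' = -A V`, and it vanishes at `T` because `V T = 1` and `u T = 0`.
For a continuous coefficient the equation is Lipschitz with a uniform constant on every compact
time interval, so Gronwall uniqueness forces `w ≡ 0`.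
-/

open Matrix Set

theorem linear_ODE_solution_eq_zero {𝕜 E : Type*} [NontriviallyNormedField 𝕜]
    [NormedAddCommGroup E] [NormedSpace ℝ E] [NormedSpace 𝕜 E]
    {L : ℝ → E →L[𝕜] E} (hL : Continuous L) {w : ℝ → E}
    (hw : ∀ t, HasDerivAt w (L t (w t)) t) {t₀ : ℝ} (h₀ : w t₀ = 0) (t : ℝ) :
    w t = 0 := by
  set a := min t₀ t - 1
  set b := max t₀ t + 1
  obtain ⟨C, hC⟩ := isCompact_Icc.exists_bound_of_continuousOn (hL.continuousOn (s := Icc a b))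
  have hlip : ∀ s ∈ Ioo a b, LipschitzOnWith C.toNNReal (L s) univ := fun s hs =>
    ((L s).lipschitz.weaken (by
      rw [← NNReal.coe_le_coe, Real.coe_toNNReal']
      exact le_max_of_le_left (hC s (Ioo_subset_Icc_self hs)))).lipschitzOnWith
  have hmem : ∀ {s}, min t₀ t ≤ s → s ≤ max t₀ t → s ∈ Ioo a b := fun h₁ h₂ =>
    ⟨by linarith, by linarith⟩
  exact ODE_solution_unique_of_mem_Ioo (v := fun s => L s) (g := fun _ => 0) hlip
    (hmem (min_le_left _ _) (le_max_left _ _)) (fun s _ => ⟨hw s, mem_univ _⟩)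
    (fun s _ => ⟨by simpa using hasDerivAt_const s (0 : E), mem_univ _⟩) h₀
    (hmem (min_le_right _ _) (le_max_right _ _))

theorem hasDerivAt_mulVec_const {𝕜 𝔸 m n : Type*} [NontriviallyNormedField 𝕜]
    [NormedRing 𝔸] [NormedAlgebra 𝕜 𝔸] [Fintype n] {V : 𝕜 → Matrix m n 𝔸}
    {V' : Matrix m n 𝔸} {x : 𝕜} (hV : ∀ i j, HasDerivAt (fun s => V s i j) (V' i j) x)
    (c : n → 𝔸) : HasDerivAt (fun s => V s *ᵥ c) (V' *ᵥ c) x :=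
  hasDerivAt_pi.2 fun i => HasDerivAt.fun_sum fun j _ => (hV i j).mul_const (c j)

theorem Continuous.toContinuousLinearMap_toLin' {𝕜 n X : Type*} [NontriviallyNormedField 𝕜]
    [CompleteSpace 𝕜] [Fintype n] [DecidableEq n] [TopologicalSpace X] {A : X → Matrix n n 𝕜}
    (hA : Continuous A) :
    Continuous fun x => LinearMap.toContinuousLinearMap (Matrix.toLin' (A x)) :=
  (LinearMap.toContinuousLinearMap.toLinearMap ∘ₗ
    (Matrix.toLin' (R := 𝕜) (n := n)).toLinearMap).continuous_of_finiteDimensional.comp hA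

theorem stmt4_general {n : Type*} [Fintype n] [DecidableEq n]
    (A V : ℝ → Matrix n n ℂ) (g g' u f : ℝ → n → ℂ) (T : ℝ)
    (hA : Continuous A)
    (hg : ∀ t, HasDerivAt g (g' t) t)
    (hfdef : ∀ t, f t = g' t + A t *ᵥ g t)
    (hu : ∀ t, HasDerivAt u (-(A t *ᵥ u t) - f t) t)
    (huT : u T = 0)
    (hV : ∀ t i j, HasDerivAt (fun s => V s i j) ((-(A t) * V t) i j) t)
    (hVT : V T = 1) :
    (∀ t, u t = -g t + V t *ᵥ g T) ∧ u 0 = V 0 *ᵥ g T - g 0 := by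
  set w : ℝ → n → ℂ := fun s => u s + g s - V s *ᵥ g T
  have hw : ∀ s, HasDerivAt w (LinearMap.toContinuousLinearMap (toLin' (-A s)) (w s)) s := by
    intro s
    refine (((hu s).add (hg s)).sub (hasDerivAt_mulVec_const (hV s) (g T))).congr_deriv ?_
    simp only [w, hfdef, LinearMap.coe_toContinuousLinearMap', toLin'_apply, neg_mulVec,
      neg_mul, ← mulVec_mulVec, mulVec_add, mulVec_sub]
    abel
  have hw0 := linear_ODE_solution_eq_zero hA.neg.toContinuousLinearMap_toLin' hw
    (t₀ := T) (by simp [w, huT, hVT])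
  have hu_eq : ∀ t, u t = -g t + V t *ᵥ g T := fun t => by
    linear_combination (norm := module) hw0 t
  exact ⟨hu_eq, by rw [hu_eq 0]; abel⟩

/-- Ray transform of a potential: if `f = g' + A g` and `u` solves
`u' + A u = -f`, `u T = 0`, and `V` solves `V' + A V = 0`, `V T = 1`, then
`u t = -g t + V t *ᵥ g T`; in particular `u 0 = V 0 *ᵥ g T - g 0`. -/
theorem stmt4 {n : Type*} [Fintype n] [DecidableEq n]
    (A V : ℝ → Matrix n n ℂ) (g g' u f : ℝ → n → ℂ) (T : ℝ)
    (hA : Continuous A) (hg' : Continuous g')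
    (hg : ∀ t, HasDerivAt g (g' t) t)
    (hfdef : ∀ t, f t = g' t + A t *ᵥ g t)
    (hu : ∀ t, HasDerivAt u (-(A t *ᵥ u t) - f t) t)
    (huT : u T = 0)
    (hV : ∀ t i j, HasDerivAt (fun s => V s i j) ((-(A t) * V t) i j) t)
    (hVT : V T = 1) :
    (∀ t, u t = -g t + V t *ᵥ g T) ∧ u 0 = V 0 *ᵥ g T - g 0 :=
  stmt4_general A V g g' u f T hA hg hfdef hu huT hV hVT
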